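/- arXiv:2011.06046 — 2 statements merged into one kernel-verified Lean document; each statement's English description precedes it below -/
import Mathlib

section
/- Let G = (X ∪ Y, E) be a finite bipartite graph with |X| = |Y|. Then every stable matching is perfect for every preference instance if and only if every connected component of G is a biclique (a complete bipartite graph on its two sides) with equally many vertices on each side. -/
open SimpleGraph Finset

/-- A preference instance: each vertex ranks its neighbors injectively
(lower rank = more preferred). This encodes a strict linear order over neighbors. -/
def IsPrefInstance {V : Type*} (G : SimpleGraph V) (rank : V → V → ℕ) : Prop :=
  ∀ v : V, Set.InjOn (rank v) (G.neighborSet v)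

/-- A vertex is matched in a subgraph if it has a partner. -/
def Matched {V : Type*} {G : SimpleGraph V} (M : G.Subgraph) (v : V) : Prop :=
  ∃ w, M.Adj v w

/-- `M` is a stable matching: it is a matching of `G` and there is no blocking pair,
i.e. no edge `xy` of `G` not in `M` such that `x` is unmatched or prefers `y` to its
partner, and `y` is unmatched or prefers `x` to its partner. -/
def IsStableMatching {V : Type*} {G : SimpleGraph V} (rank : V → V → ℕ) (M : G.Subgraph) :
    Prop :=
  M.IsMatching ∧
    ¬ ∃ x y, G.Adj x y ∧ ¬ M.Adj x y ∧
      (∀ w, M.Adj x w → rank x y < rank x w) ∧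
      (∀ w, M.Adj y w → rank y x < rank y w)

/-- `G` is bipartite with parts `X` and `Y`. -/
def IsBipartiteWith {V : Type*} (G : SimpleGraph V) (X Y : Finset V) : Prop :=
  Disjoint X Y ∧ (∀ v : V, v ∈ X ∨ v ∈ Y) ∧
    ∀ ⦃a b : V⦄, G.Adj a b → (a ∈ X ∧ b ∈ Y) ∨ (a ∈ Y ∧ b ∈ X)

/-- The second neighborhood `N(N(x))`. -/
def NN {V : Type*} (G : SimpleGraph V) [Fintype V] [DecidableEq V] [DecidableRel G.Adj]
    (x : V) : Finset V :=
  (G.neighborFinset x).biUnion fun y => G.neighborFinset y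

/-!
Both sides are equivalent to every maximal matching being perfect (Sumner's randomly matchable
graphs, `RandomlyMatchable`). A maximal matching is stable once every vertex ranks its partner
first, and a stable matching is maximal since two adjacent unmatched vertices would block it.

If every maximal matching is perfect and `x y z w` is a path, extend `{xy, zw}` to a perfect
matching and trade these two edges for `yz`: the new matching misses exactly `x` and `w`, so it
is not maximal, i.e. `x ~ w`. Shortcutting walks with this makes each component complete
bipartite, and a perfect matching pairs off the two sides of each component. Conversely, in a
balanced complete bipartite component, partners pair the matched vertices of the two sides, so an
unmatched vertex faces an unmatched vertex on the other side, adjacent to it.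
-/

open Subgraph

namespace SimpleGraph

variable {V : Type*} {G : SimpleGraph V}

namespace Subgraph

/-- For matchings, this is equivalent to being maximal under inclusion. -/
def IsMaximalMatching (M : G.Subgraph) : Prop :=
  M.IsMatching ∧ ∀ ⦃x y⦄, G.Adj x y → Matched M x ∨ Matched M y

lemma notMem_support_subgraphOfAdj {x y u : V} (hxy : G.Adj x y) (hux : u ≠ x) (huy : u ≠ y) :
    u ∉ (G.subgraphOfAdj hxy).support := fun hu => by
  rcases support_subset_verts _ hu with rfl | rfl
  exacts [hux rfl, huy rfl]

lemma disjoint_support_subgraphOfAdj {H : G.Subgraph} {x y : V} (hxy : G.Adj x y)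
    (hx : x ∉ H.support) (hy : y ∉ H.support) :
    Disjoint H.support (G.subgraphOfAdj hxy).support :=
  Set.disjoint_right.2 fun u hu => by
    rcases support_subset_verts _ hu with rfl | rfl
    exacts [hx, hy]

lemma IsMatching.deleteVerts {M : G.Subgraph} (hM : M.IsMatching) {s : Set V}
    (hs : ∀ ⦃u v⦄, M.Adj u v → u ∈ s → v ∈ s) : (M.deleteVerts s).IsMatching := by
  rintro v ⟨hv, hvs⟩
  obtain ⟨w, hvw, huniq⟩ := hM hv
  refine ⟨w, deleteVerts_adj.2 ⟨hv, hvs, M.edge_vert hvw.symm, fun hws => hvs (hs hvw.symm hws),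
    hvw⟩, fun u hu => huniq u (deleteVerts_adj.1 hu).2.2.2.2⟩

lemma IsMatching.card_le_card {M : G.Subgraph} (hM : M.IsMatching) {s t : Finset V}
    (h : ∀ a ∈ s, ∃ b ∈ t, M.Adj a b) : #s ≤ #t :=
  card_le_card_of_forall_subsingleton M.Adj h
    fun _ _ _ ha₁ _ ha₂ => hM.eq_of_adj_right ha₁.2 ha₂.2

lemma exists_isMaximalMatching_ge [Finite V] {M₀ : G.Subgraph} (hM₀ : M₀.IsMatching) :
    ∃ M : G.Subgraph, M₀ ≤ M ∧ M.IsMaximalMatching := by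
  obtain ⟨M, hle, hmax⟩ := Finite.exists_le_maximal hM₀
  refine ⟨M, hle, hmax.prop, fun x y hxy => ?_⟩
  by_contra! ⟨hx, hy⟩
  have hsup := hmax.2 (hmax.prop.sup (.subgraphOfAdj hxy)
    (disjoint_support_subgraphOfAdj hxy hx hy)) le_sup_left
  exact hx ⟨y, hsup.2 (sup_adj.2 (.inr (subgraphOfAdj_adj_self hxy)))⟩

lemma IsMaximalMatching.exists_isStableMatching [Countable V] {M : G.Subgraph}
    (hM : M.IsMaximalMatching) :
    ∃ rank : V → V → ℕ, IsPrefInstance G rank ∧ IsStableMatching rank M := by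
  classical
  obtain ⟨e, he⟩ := Countable.exists_injective_nat V
  refine ⟨fun v u => if M.Adj v u then 0 else e u + 1, fun v u₁ _ u₂ _ h => ?_, hM.1, ?_⟩
  · by_cases h₁ : M.Adj v u₁ <;> by_cases h₂ : M.Adj v u₂ <;>
      simp only [h₁, h₂, if_true, if_false] at h
    · exact hM.1.eq_of_adj_left h₁ h₂
    · omega
    · omega
    · exact he (by omega)
  · rintro ⟨x, y, hxy, -, hx, hy⟩
    rcases hM.2 hxy with ⟨w, hw⟩ | ⟨w, hw⟩
    · simpa [hw] using hx w hw
    · simpa [hw] using hy w hw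

end Subgraph

def RandomlyMatchable (G : SimpleGraph V) : Prop :=
  ∀ M : G.Subgraph, M.IsMaximalMatching → ∀ v, Matched M v

lemma _root_.IsStableMatching.isMaximalMatching {rank : V → V → ℕ} {M : G.Subgraph}
    (hM : IsStableMatching rank M) : M.IsMaximalMatching := by
  refine ⟨hM.1, fun x y hxy => ?_⟩
  by_contra! ⟨hx, hy⟩
  exact hM.2 ⟨x, y, hxy, fun h => hx ⟨y, h⟩, fun w h => (hx ⟨w, h⟩).elim,
    fun w h => (hy ⟨w, h⟩).elim⟩

theorem forall_isStableMatching_matched_iff_randomlyMatchable [Countable V] :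
    (∀ rank : V → V → ℕ, IsPrefInstance G rank →
        ∀ M : G.Subgraph, IsStableMatching rank M → ∀ v : V, Matched M v) ↔
      G.RandomlyMatchable := by
  refine ⟨fun h M hM => ?_, fun h _ _ M hM => h M hM.isMaximalMatching⟩
  obtain ⟨rank, hrank, hstable⟩ := hM.exists_isStableMatching
  exact h rank hrank M hstable

theorem RandomlyMatchable.adj_of_adj_of_adj_of_adj [Finite V] (hG : G.RandomlyMatchable)
    {x y z w : V} (hxy : G.Adj x y) (hyz : G.Adj y z) (hzw : G.Adj z w)
    (hxz : x ≠ z) (hyw : y ≠ w) (hxw : x ≠ w) : G.Adj x w := by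
  by_contra hnxw
  obtain ⟨M, hM₀, hM⟩ := exists_isMaximalMatching_ge ((IsMatching.subgraphOfAdj hxy).sup
    (.subgraphOfAdj hzw) (disjoint_support_subgraphOfAdj hzw
      (notMem_support_subgraphOfAdj hxy hxz.symm hyz.ne.symm)
      (notMem_support_subgraphOfAdj hxy hxw.symm hyw.symm)))
  have hMxy : M.Adj x y := hM₀.2 (Subgraph.sup_adj.2 (.inl (subgraphOfAdj_adj_self hxy)))
  have hMzw : M.Adj z w := hM₀.2 (Subgraph.sup_adj.2 (.inr (subgraphOfAdj_adj_self hzw)))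
  set s : Set V := {x, y, z, w}
  have hs : ∀ ⦃u v⦄, M.Adj u v → u ∈ s → v ∈ s := by
    rintro u v huv (rfl | rfl | rfl | rfl)
    · simp [hM.1.eq_of_adj_left huv hMxy, s]
    · simp [hM.1.eq_of_adj_left huv hMxy.symm, s]
    · simp [hM.1.eq_of_adj_left huv hMzw, s]
    · simp [hM.1.eq_of_adj_left huv hMzw.symm, s]
  set M' := M.deleteVerts s ⊔ G.subgraphOfAdj hyz
  have hM' : M'.IsMatching := (hM.1.deleteVerts hs).sup (.subgraphOfAdj hyz)
    (disjoint_support_subgraphOfAdj hyz (fun ⟨_, h⟩ => (deleteVerts_adj.1 h).2.1 (by simp [s]))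
      (fun ⟨_, h⟩ => (deleteVerts_adj.1 h).2.1 (by simp [s])))
  have hM'yz : M'.Adj y z := Subgraph.sup_adj.2 (.inr (subgraphOfAdj_adj_self hyz))
  have hmatched : ∀ v, v ≠ x → v ≠ w → Matched M' v := by
    intro v hvx hvw
    by_cases hvs : v ∈ s
    · obtain rfl | rfl : v = y ∨ v = z := by simp_all [s]
      exacts [⟨z, hM'yz⟩, ⟨y, hM'yz.symm⟩]
    · obtain ⟨u, hvu⟩ := hG M hM v
      exact ⟨u, Subgraph.sup_adj.2 (.inl (deleteVerts_adj.2 ⟨M.edge_vert hvu, hvs,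
        M.edge_vert hvu.symm, fun hus => hvs (hs hvu.symm hus), hvu⟩))⟩
  have hmax : M'.IsMaximalMatching := by
    refine ⟨hM', fun a b hab => ?_⟩
    by_contra! ⟨ha, hb⟩
    have ha' : a = x ∨ a = w := by by_contra!; exact ha (hmatched a this.1 this.2)
    have hb' : b = x ∨ b = w := by by_contra!; exact hb (hmatched b this.1 this.2)
    rcases ha' with rfl | rfl <;> rcases hb' with rfl | rfl
    exacts [hab.ne rfl, hnxw hab, hnxw hab.symm, hab.ne rfl]
  obtain ⟨u, hxu⟩ := hG M' hmax x
  rcases Subgraph.sup_adj.1 hxu with h | h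
  · exact (deleteVerts_adj.1 h).2.1 (by simp [s])
  · exact notMem_support_subgraphOfAdj hyz hxy.ne hxz ⟨u, h⟩

theorem RandomlyMatchable.adj_of_reachable [Finite V] (hG : G.RandomlyMatchable) {X : Set V}
    (hX : ∀ ⦃a b⦄, G.Adj a b → (a ∈ X ↔ b ∉ X)) {a b : V} (hab : G.Reachable a b)
    (hside : a ∈ X ↔ b ∉ X) : G.Adj a b := by
  obtain ⟨p⟩ := hab
  suffices ∀ u (p : G.Walk u b), ((u ∈ X ↔ b ∉ X) → G.Adj u b) ∧
      ((u ∈ X ↔ b ∈ X) → u = b ∨ ∃ c, G.Adj u c ∧ G.Adj c b) from (this a p).1 hside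
  intro u q
  clear hside p
  induction q with
  | nil => exact ⟨fun h => by tauto, fun _ => .inl rfl⟩
  | @cons u u' b huu' _ ih =>
    have hside' := hX huu'
    refine ⟨fun hub => ?_, fun _ => .inr ⟨u', huu', ih.1 (by tauto)⟩⟩
    obtain rfl | ⟨c, hu'c, hcb⟩ := ih.2 (by tauto)
    · exact huu'
    by_cases huc : u = c
    · exact huc ▸ hcb
    by_cases hu'b : u' = b
    · exact hu'b ▸ huu'
    exact hG.adj_of_adj_of_adj_of_adj huu' hu'c hcb huc hu'b (by rintro rfl; tauto)

end SimpleGraph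

namespace IsBipartiteWith

variable {V : Type*} {G : SimpleGraph V} {X Y : Finset V}

lemma symm (h : _root_.IsBipartiteWith G X Y) : _root_.IsBipartiteWith G Y X :=
  ⟨h.1.symm, fun v => (h.2.1 v).symm, fun _ _ hab => (h.2.2 hab).symm⟩

lemma mem_right_iff (h : _root_.IsBipartiteWith G X Y) {a : V} : a ∈ Y ↔ a ∉ X :=
  ⟨fun ha haX => disjoint_left.1 h.1 haX ha, (h.2.1 a).resolve_left⟩

lemma mem_left_iff_of_adj (h : _root_.IsBipartiteWith G X Y) ⦃a b : V⦄ (hab : G.Adj a b) :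
    a ∈ X ↔ b ∉ X := by
  rcases h.2.2 hab with ⟨ha, hb⟩ | ⟨ha, hb⟩
  · simp [ha, ← h.mem_right_iff, hb]
  · simp [h.mem_right_iff.1 ha, hb]

variable [DecidableRel G.Reachable]

lemma mem_filter_reachable_of_adj (h : _root_.IsBipartiteWith G X Y) {a b v : V}
    (hab : G.Adj a b) (ha : a ∈ {x ∈ X | G.Reachable x v}) :
    b ∈ {y ∈ Y | G.Reachable y v} := by
  rw [mem_filter] at ha ⊢
  exact ⟨h.mem_right_iff.2 ((h.mem_left_iff_of_adj hab).1 ha.1), hab.symm.reachable.trans ha.2⟩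

lemma exists_unmatched_of_card_eq (h : _root_.IsBipartiteWith G X Y) {M : G.Subgraph}
    (hM : M.IsMatching) {v : V}
    (hbal : #{a ∈ X | G.Reachable a v} = #{b ∈ Y | G.Reachable b v}) (hv : v ∈ X)
    (hvM : ¬ Matched M v) : ∃ b ∈ Y, G.Reachable b v ∧ ¬ Matched M b := by
  classical
  by_contra! hY
  have hvX : v ∈ {a ∈ X | G.Reachable a v} := mem_filter.2 ⟨hv, .rfl⟩
  have hpartner : ∀ b ∈ {b ∈ Y | G.Reachable b v},
      ∃ a ∈ {a ∈ X | G.Reachable a v}.erase v, M.Adj b a := by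
    intro b hb
    obtain ⟨a, hba⟩ := hY b (mem_filter.1 hb).1 (mem_filter.1 hb).2
    refine ⟨a, mem_erase.2 ⟨?_, h.symm.mem_filter_reachable_of_adj (M.adj_sub hba) hb⟩, hba⟩
    rintro rfl
    exact hvM ⟨b, hba.symm⟩
  have hle := hM.card_le_card hpartner
  rw [card_erase_of_mem hvX] at hle
  have := card_pos.2 ⟨v, hvX⟩
  omega

theorem randomlyMatchable_iff [Finite V] (h : _root_.IsBipartiteWith G X Y) :
    G.RandomlyMatchable ↔
      ((∀ a ∈ X, ∀ b ∈ Y, G.Reachable a b → G.Adj a b) ∧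
        ∀ v : V, #{a ∈ X | G.Reachable a v} = #{b ∈ Y | G.Reachable b v}) := by
  constructor
  · intro hG
    refine ⟨fun a ha b hb hab => hG.adj_of_reachable (X := ↑X) h.mem_left_iff_of_adj hab
      (by simpa [ha] using h.mem_right_iff.1 hb), fun v => ?_⟩
    obtain ⟨M, -, hM⟩ := exists_isMaximalMatching_ge (G := G) (M₀ := ⊥) fun _ h => h.elim
    have hpartner {X Y : Finset V} (hB : _root_.IsBipartiteWith G X Y) :
        ∀ a ∈ {x ∈ X | G.Reachable x v}, ∃ b ∈ {y ∈ Y | G.Reachable y v}, M.Adj a b :=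
      fun a ha => let ⟨b, hab⟩ := hG M hM a
        ⟨b, hB.mem_filter_reachable_of_adj (M.adj_sub hab) ha, hab⟩
    exact (hM.1.card_le_card (hpartner h)).antisymm (hM.1.card_le_card (hpartner h.symm))
  · rintro ⟨hcompl, hbal⟩ M hM v
    by_contra hv
    rcases h.2.1 v with hvX | hvY
    · obtain ⟨b, hbY, hbv, hb⟩ := h.exists_unmatched_of_card_eq hM.1 (hbal v) hvX hv
      exact (hM.2 (hcompl v hvX b hbY hbv.symm)).elim hv hb
    · obtain ⟨a, haX, hav, ha⟩ := h.symm.exists_unmatched_of_card_eq hM.1 (hbal v).symm hvY hv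
      exact (hM.2 (hcompl a haX v hvY hav)).elim ha hv

end IsBipartiteWith

theorem stmt_8_general {V : Type*} [Fintype V] (G : SimpleGraph V)
    [DecidableRel G.Reachable] (X Y : Finset V)
    (hBip : _root_.IsBipartiteWith G X Y) :
    (∀ rank : V → V → ℕ, IsPrefInstance G rank →
        ∀ M : G.Subgraph, IsStableMatching rank M → ∀ v : V, Matched M v) ↔
      ((∀ a ∈ X, ∀ b ∈ Y, G.Reachable a b → G.Adj a b) ∧
        ∀ v : V, (X.filter fun a => G.Reachable a v).card =
          (Y.filter fun b => G.Reachable b v).card) :=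
  forall_isStableMatching_matched_iff_randomlyMatchable.trans hBip.randomlyMatchable_iff

theorem stmt_8 {V : Type*} [Fintype V] [DecidableEq V] (G : SimpleGraph V)
    [DecidableRel G.Adj] [DecidableRel G.Reachable] (X Y : Finset V)
    (hBip : _root_.IsBipartiteWith G X Y) (hcard : X.card = Y.card) :
    (∀ rank : V → V → ℕ, IsPrefInstance G rank →
        ∀ M : G.Subgraph, IsStableMatching rank M → ∀ v : V, Matched M v) ↔
      ((∀ a ∈ X, ∀ b ∈ Y, G.Reachable a b → G.Adj a b) ∧
        ∀ v : V, (X.filter fun a => G.Reachable a v).card =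
          (Y.filter fun b => G.Reachable b v).card) :=
  stmt_8_general G X Y hBip
end

section
/- Let G = (X ∪ Y, E) be a finite bipartite graph with a preference instance P. Then there exists at least one stable matching. -/
open SimpleGraph Finset

/-!
Induct on the edges of `G`. Suppose the top choice `t` of some vertex `p` has a neighbour `q`
that `t` ranks below `p`. In a stable matching of `G - tq` the edge `pt` does not block, so `t`
is matched to someone it likes at least as much as `p`, hence more than `q`; so the same
matching is stable in `G`. If there is no such edge, every vertex ranks last each vertex that
ranks it first. Then letting every vertex of `X` take its top choice gives a matching (two
proposers to the same vertex would each be ranked below the other), and it is stable because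
every edge has an endpoint in `X`, which already holds its favourite.
-/

section

variable {V : Type*} {G H : SimpleGraph V} {rank : V → V → ℕ} {X : Set V} {p t : V}

def IsTopChoice (G : SimpleGraph V) (rank : V → V → ℕ) (p t : V) : Prop :=
  G.Adj p t ∧ ∀ w, G.Adj p w → rank p t ≤ rank p w

theorem IsPrefInstance.mono (hP : IsPrefInstance G rank) (hHG : H ≤ G) :
    IsPrefInstance H rank :=
  fun v => (hP v).mono fun _ hw => hHG hw

namespace IsTopChoice

theorem exists_of_adj {b : V} (hpb : G.Adj p b) : ∃ t, IsTopChoice G rank p t := by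
  obtain ⟨t, hpt, hmin⟩ :=
    (InvImage.wf (rank p) wellFounded_lt).has_min (G.neighborSet p) ⟨b, hpb⟩
  exact ⟨t, hpt, fun w hpw => not_lt.1 (hmin w hpw)⟩

theorem of_le (ht : IsTopChoice G rank p t) (hHG : H ≤ G) (hpt : H.Adj p t) :
    IsTopChoice H rank p t :=
  ⟨hpt, fun w hw => ht.2 w (hHG hw)⟩

theorem eq_of_rank_le (hP : IsPrefInstance G rank) (ht : IsTopChoice G rank p t) {w : V}
    (hpw : G.Adj p w) (h : rank p w ≤ rank p t) : w = t :=
  hP p hpw ht.1 (le_antisymm h (ht.2 w hpw))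

end IsTopChoice

theorem IsBipartiteWith.mem_iff_notMem {X Y : Finset V} (hBip : _root_.IsBipartiteWith G X Y)
    {a b : V} (hab : G.Adj a b) : a ∈ X ↔ b ∉ X := by
  rcases hBip.2.2 hab with ⟨ha, hb⟩ | ⟨ha, hb⟩
  · exact iff_of_true ha (Finset.disjoint_right.1 hBip.1 hb)
  · exact iff_of_false (Finset.disjoint_right.1 hBip.1 ha) (not_not.2 hb)

namespace IsStableMatching

theorem exists_adj_rank_le {M : G.Subgraph} (hM : IsStableMatching rank M)
    (hP : IsPrefInstance G rank) (ht : IsTopChoice G rank p t) :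
    ∃ w, M.Adj t w ∧ rank t w ≤ rank t p := by
  by_cases hpt : M.Adj p t
  · exact ⟨p, hpt.symm, le_rfl⟩
  by_contra! ht_prefers_p
  refine hM.2 ⟨p, t, ht.1, hpt, fun w hpw => ?_, ht_prefers_p⟩
  refine lt_of_le_of_ne (ht.2 w (M.adj_sub hpw)) fun h => hpt ?_
  rwa [ht.eq_of_rank_le hP (M.adj_sub hpw) h.ge] at hpw

theorem map_ofLE_deleteEdges {q : V} (hP : IsPrefInstance G rank)
    (ht : IsTopChoice G rank p t) (hq : rank t p < rank t q)
    {M : (G.deleteEdges {s(t, q)}).Subgraph} (hM : IsStableMatching rank M) :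
    IsStableMatching rank (M.map (Hom.ofLE (G.deleteEdges_le _))) := by
  have hle := G.deleteEdges_le {s(t, q)}
  have hpt : (G.deleteEdges {s(t, q)}).Adj p t := by
    have hpq : p ≠ q := fun h => hq.ne (h ▸ rfl)
    simp [ht.1, ht.1.ne, hpq]
  obtain ⟨w, htw, hwp⟩ := hM.exists_adj_rank_le (hP.mono hle) (ht.of_le hle hpt)
  refine ⟨hM.1.map_ofLE hle, ?_⟩
  rintro ⟨x, y, hxy, hnM, hx, hy⟩
  simp only [Subgraph.map_adj, Hom.coe_ofLE, Relation.map_id_id] at hnM hx hy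
  by_cases hxy' : (G.deleteEdges {s(t, q)}).Adj x y
  · exact hM.2 ⟨x, y, hxy', hnM, hx, hy⟩
  have hxy_tq : s(x, y) = s(t, q) := by
    by_contra h
    exact hxy' ((deleteEdges_adj ..).2 ⟨hxy, h⟩)
  rcases Sym2.eq_iff.1 hxy_tq with ⟨rfl, rfl⟩ | ⟨rfl, rfl⟩
  · have := hx w htw
    omega
  · have := hy w htw
    omega

end IsStableMatching

def proposalSubgraph (G : SimpleGraph V) (rank : V → V → ℕ) (X : Set V) : G.Subgraph where
  verts := {v | ∃ w, (v ∈ X ∧ IsTopChoice G rank v w) ∨ (w ∈ X ∧ IsTopChoice G rank w v)}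
  Adj a b := (a ∈ X ∧ IsTopChoice G rank a b) ∨ (b ∈ X ∧ IsTopChoice G rank b a)
  adj_sub := by
    rintro a b (⟨-, h⟩ | ⟨-, h⟩)
    exacts [h.1, h.1.symm]
  edge_vert h := ⟨_, h⟩
  symm := ⟨fun _ _ h => h.symm⟩

theorem mem_proposalSubgraph_verts {v : V} :
    v ∈ (proposalSubgraph G rank X).verts ↔ ∃ w, (proposalSubgraph G rank X).Adj v w :=
  Iff.rfl

theorem proposalSubgraph_adj {a b : V} :
    (proposalSubgraph G rank X).Adj a b ↔
      (a ∈ X ∧ IsTopChoice G rank a b) ∨ (b ∈ X ∧ IsTopChoice G rank b a) :=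
  Iff.rfl

theorem isMatching_proposalSubgraph (hP : IsPrefInstance G rank)
    (hX : ∀ ⦃a b⦄, G.Adj a b → (a ∈ X ↔ b ∉ X))
    (hlast : ∀ p t q, IsTopChoice G rank p t → G.Adj t q → rank t q ≤ rank t p) :
    (proposalSubgraph G rank X).IsMatching := by
  intro v hv
  obtain ⟨w, hw⟩ := mem_proposalSubgraph_verts.1 hv
  refine ⟨w, hw, fun u (hu : (proposalSubgraph G rank X).Adj v u) => ?_⟩
  rw [proposalSubgraph_adj] at hu hw
  rcases hu with ⟨hvX, hu⟩ | ⟨huX, hu⟩ <;> rcases hw with ⟨hvX', hw⟩ | ⟨hwX, hw⟩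
  · exact hw.eq_of_rank_le hP hu.1 (hu.2 w hw.1)
  · exact absurd hvX ((hX hw.1).1 hwX)
  · exact absurd hvX' ((hX hu.1).1 huX)
  · exact hP v hu.1.symm hw.1.symm
      (le_antisymm (hlast w v u hw hu.1.symm) (hlast u v w hu hw.1.symm))

theorem isStableMatching_proposalSubgraph (hP : IsPrefInstance G rank)
    (hX : ∀ ⦃a b⦄, G.Adj a b → (a ∈ X ↔ b ∉ X))
    (hlast : ∀ p t q, IsTopChoice G rank p t → G.Adj t q → rank t q ≤ rank t p) :
    IsStableMatching rank (proposalSubgraph G rank X) := by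
  refine ⟨isMatching_proposalSubgraph hP hX hlast, ?_⟩
  have proposer_not_blocking : ∀ a b, a ∈ X → G.Adj a b →
      ¬ ∀ w, (proposalSubgraph G rank X).Adj a w → rank a b < rank a w := fun a b ha hab h => by
    obtain ⟨t, ht⟩ := IsTopChoice.exists_of_adj (rank := rank) hab
    exact (ht.2 b hab).not_gt (h t (proposalSubgraph_adj.2 (Or.inl ⟨ha, ht⟩)))
  rintro ⟨x, y, hxy, -, hx, hy⟩
  by_cases hxX : x ∈ X
  · exact proposer_not_blocking x y hxX hxy hx
  · exact proposer_not_blocking y x (not_not.1 (mt (hX hxy).2 hxX)) hxy.symm hy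

theorem exists_isStableMatching [Finite V] (X : Set V)
    (hX : ∀ ⦃a b⦄, G.Adj a b → (a ∈ X ↔ b ∉ X)) (hP : IsPrefInstance G rank) :
    ∃ M : G.Subgraph, IsStableMatching rank M := by
  induction G using WellFoundedLT.induction with
  | _ G ih =>
  by_cases hdel : ∃ p t q, IsTopChoice G rank p t ∧ G.Adj t q ∧ rank t p < rank t q
  · obtain ⟨p, t, q, ht, htq, hq⟩ := hdel
    have hlt : G.deleteEdges {s(t, q)} < G :=
      edgeSet_ssubset_edgeSet.1 <| by
        simpa [edgeSet_deleteEdges] using Set.sdiff_singleton_ssubset.2 (G.mem_edgeSet.2 htq)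
    obtain ⟨M, hM⟩ := ih _ hlt (fun _ _ h => hX (deleteEdges_le _ h)) (hP.mono hlt.le)
    exact ⟨_, hM.map_ofLE_deleteEdges hP ht hq⟩
  · simp only [not_exists, not_and, not_lt] at hdel
    exact ⟨_, isStableMatching_proposalSubgraph hP hX hdel⟩

end

theorem stmt_15_general {V : Type*} [Fintype V] (G : SimpleGraph V)
    (X Y : Finset V) (hBip : _root_.IsBipartiteWith G X Y)
    (rank : V → V → ℕ) (hP : IsPrefInstance G rank) :
    ∃ M : G.Subgraph, IsStableMatching rank M :=
  exists_isStableMatching (X : Set V) (fun _ _ hab => hBip.mem_iff_notMem hab) hP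

theorem stmt_15 {V : Type*} [Fintype V] [DecidableEq V] (G : SimpleGraph V)
    [DecidableRel G.Adj] (X Y : Finset V) (hBip : _root_.IsBipartiteWith G X Y)
    (rank : V → V → ℕ) (hP : IsPrefInstance G rank) :
    ∃ M : G.Subgraph, IsStableMatching rank M :=
  stmt_15_general G X Y hBip rank hP
end
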